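/- Let A be a normal n×n matrix and C Hermitian with AC = CA. Then X̂ = (AA* − I)† C is Hermitian and commutes with A, A*, and C; moreover the discrete Lyapunov equation A*XA − X = C has a solution if and only if X̂ is a solution. -/
import Mathlib


open Matrix

/-- `P` is the Moore–Penrose inverse of `A`. -/
def IsMoorePenroseInverse {n : ℕ} (A P : Matrix (Fin n) (Fin n) ℂ) : Prop :=
  A * P * A = A ∧ P * A * P = P ∧ (A * P)ᴴ = A * P ∧ (P * A)ᴴ = P * A

private lemma mp_unique {n : ℕ} {M P Q : Matrix (Fin n) (Fin n) ℂ}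
    (hP : IsMoorePenroseInverse M P) (hQ : IsMoorePenroseInverse M Q) : P = Q := by
  obtain ⟨p1, p2, p3, p4⟩ := hP
  obtain ⟨q1, q2, q3, q4⟩ := hQ
  have e1 : M * P = M * Q := by
    calc M * P = (M * P)ᴴ := p3.symm
      _ = ((M * Q * M) * P)ᴴ := by rw [q1]
      _ = ((M * Q) * (M * P))ᴴ := by simp only [Matrix.mul_assoc]
      _ = (M * P)ᴴ * (M * Q)ᴴ := by rw [conjTranspose_mul]
      _ = (M * P) * (M * Q) := by rw [p3, q3]
      _ = (M * P * M) * Q := by simp only [Matrix.mul_assoc]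
      _ = M * Q := by rw [p1]
  have e2 : P * M = Q * M := by
    calc P * M = (P * M)ᴴ := p4.symm
      _ = (P * (M * Q * M))ᴴ := by rw [q1]
      _ = ((P * M) * (Q * M))ᴴ := by simp only [Matrix.mul_assoc]
      _ = (Q * M)ᴴ * (P * M)ᴴ := by rw [conjTranspose_mul]
      _ = (Q * M) * (P * M) := by rw [p4, q4]
      _ = Q * (M * P * M) := by simp only [Matrix.mul_assoc]
      _ = Q * M := by rw [p1]
  calc P = P * M * P := p2.symm
    _ = Q * M * P := by rw [e2]
    _ = Q * (M * P) := by simp only [Matrix.mul_assoc]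
    _ = Q * (M * Q) := by rw [e1]
    _ = Q * M * Q := by simp only [Matrix.mul_assoc]
    _ = Q := q2

private lemma trace_zero_imp {n : ℕ} (D : Matrix (Fin n) (Fin n) ℂ)
    (h : trace (Dᴴ * D) = 0) : D = 0 := by
  have ht : (∑ j, ∑ i, Complex.normSq (D i j) : ℝ) = 0 := by
    have e : trace (Dᴴ * D) = (∑ j, ∑ i, (Complex.normSq (D i j) : ℂ)) := by
      simp [Matrix.trace, Matrix.mul_apply, Matrix.diag, Matrix.conjTranspose_apply,
        Complex.normSq_eq_conj_mul_self]
    rw [e] at h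
    exact_mod_cast h
  ext i j
  have h1 : ∀ j ∈ Finset.univ, (0:ℝ) ≤ ∑ i, Complex.normSq (D i j) :=
    fun j _ => Finset.sum_nonneg fun i _ => Complex.normSq_nonneg _
  have h2 := (Finset.sum_eq_zero_iff_of_nonneg h1).1 ht j (Finset.mem_univ j)
  have h3 := (Finset.sum_eq_zero_iff_of_nonneg
    (fun i _ => Complex.normSq_nonneg (D i j))).1 h2 i (Finset.mem_univ i)
  simpa using Complex.normSq_eq_zero.mp h3

/-- If `M` is Hermitian with Moore–Penrose inverse `P` satisfying `MP = PM`,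
then anything commuting with `M` commutes with `P`. -/
private lemma comm_mp {n : ℕ} {M P : Matrix (Fin n) (Fin n) ℂ}
    (hM : Mᴴ = M) (h1 : M * P * M = M) (h2 : P * M * P = P)
    (h3 : (M * P)ᴴ = M * P) (hMP : M * P = P * M)
    {B : Matrix (Fin n) (Fin n) ℂ} (hB : B * M = M * B) : B * P = P * B := by
  have hBH : Bᴴ * M = M * Bᴴ := by
    calc Bᴴ * M = Bᴴ * Mᴴ := by rw [hM]
      _ = (M * B)ᴴ := by rw [conjTranspose_mul]
      _ = (B * M)ᴴ := by rw [hB]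
      _ = Mᴴ * Bᴴ := by rw [conjTranspose_mul]
      _ = M * Bᴴ := by rw [hM]
  have hPE : P * (M * P) = P := by rw [← Matrix.mul_assoc, h2]
  have hEP : (M * P) * P = P := by
    calc (M * P) * P = (P * M) * P := by rw [hMP]
      _ = P := h2
  -- (M*P) * X * (M*P) = X * (M*P)  for X commuting with M (key1 with B, key2 with Bᴴ)
  have key : ∀ X : Matrix (Fin n) (Fin n) ℂ, X * M = M * X →
      (M * P) * (X * (M * P)) = X * (M * P) := by
    intro X hX
    calc (M * P) * (X * (M * P)) = (M * P) * ((X * M) * P) := by simp only [Matrix.mul_assoc]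
      _ = (M * P) * ((M * X) * P) := by rw [hX]
      _ = ((M * P) * M) * (X * P) := by simp only [Matrix.mul_assoc]
      _ = M * (X * P) := by rw [h1]
      _ = (M * X) * P := by simp only [Matrix.mul_assoc]
      _ = (X * M) * P := by rw [hX]
      _ = X * (M * P) := by simp only [Matrix.mul_assoc]
  have key1 := key B hB
  have key2 := key Bᴴ hBH
  have hEB : (M * P) * B = B * (M * P) := by
    have t1 : ((M * P) * (Bᴴ * (M * P)))ᴴ = ((M * P) * B) * (M * P) := by
      rw [conjTranspose_mul, conjTranspose_mul, conjTranspose_conjTranspose, h3]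
    have t2 : (Bᴴ * (M * P))ᴴ = (M * P) * B := by
      rw [conjTranspose_mul, conjTranspose_conjTranspose, h3]
    have t3 : ((M * P) * B) * (M * P) = (M * P) * B := by rw [← t1, key2, t2]
    calc (M * P) * B = ((M * P) * B) * (M * P) := t3.symm
      _ = (M * P) * (B * (M * P)) := by simp only [Matrix.mul_assoc]
      _ = B * (M * P) := key1
  -- now Q := B*P - P*B vanishes
  have hEQ1 : (M * P) * (B * P) = B * P := by
    calc (M * P) * (B * P) = ((M * P) * B) * P := by simp only [Matrix.mul_assoc]
      _ = (B * (M * P)) * P := by rw [hEB]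
      _ = B * ((M * P) * P) := by simp only [Matrix.mul_assoc]
      _ = B * P := by rw [hEP]
  have hEQ2 : (M * P) * (P * B) = P * B := by
    calc (M * P) * (P * B) = ((M * P) * P) * B := by simp only [Matrix.mul_assoc]
      _ = P * B := by rw [hEP]
  have hQE1 : (B * P) * (M * P) = B * P := by
    calc (B * P) * (M * P) = B * (P * (M * P)) := by simp only [Matrix.mul_assoc]
      _ = B * P := by rw [hPE]
  have hQE2 : (P * B) * (M * P) = P * B := by
    calc (P * B) * (M * P) = P * (B * (M * P)) := by simp only [Matrix.mul_assoc]
      _ = P * ((M * P) * B) := by rw [hEB]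
      _ = (P * (M * P)) * B := by simp only [Matrix.mul_assoc]
      _ = P * B := by rw [hPE]
  have u1 : M * (B * P) * M = M * B := by
    calc M * (B * P) * M = (M * B) * (P * M) := by simp only [Matrix.mul_assoc]
      _ = (B * M) * (P * M) := by rw [hB]
      _ = B * (M * P * M) := by simp only [Matrix.mul_assoc]
      _ = B * M := by rw [h1]
      _ = M * B := hB
  have u2 : M * (P * B) * M = M * B := by
    calc M * (P * B) * M = (M * P) * (B * M) := by simp only [Matrix.mul_assoc]
      _ = (M * P) * (M * B) := by rw [hB]
      _ = (M * P * M) * B := by simp only [Matrix.mul_assoc]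
      _ = M * B := by rw [h1]
  have hMQM : M * (B * P - P * B) * M = 0 := by
    rw [Matrix.mul_sub, Matrix.sub_mul, u1, u2, sub_self]
  have final : B * P - P * B = 0 := by
    have hEQ : (M * P) * (B * P - P * B) = B * P - P * B := by
      rw [Matrix.mul_sub, hEQ1, hEQ2]
    have hQE : (B * P - P * B) * (M * P) = B * P - P * B := by
      rw [Matrix.sub_mul, hQE1, hQE2]
    calc B * P - P * B = (M * P) * ((B * P - P * B) * (M * P)) := by rw [hQE, hEQ]
      _ = (P * M) * ((B * P - P * B) * (M * P)) := by rw [hMP]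
      _ = P * (M * (B * P - P * B) * M) * P := by simp only [Matrix.mul_assoc]
      _ = 0 := by rw [hMQM, Matrix.mul_zero, Matrix.zero_mul]
  exact sub_eq_zero.mp final

/-- For `A` normal and `C` Hermitian with `AC = CA`: `X̂ = (AAᴴ − I)† C` is
Hermitian and commutes with `A`, `Aᴴ`, `C`; and the discrete Lyapunov equation
`AᴴXA − X = C` has a solution iff `X̂` is a solution. -/
theorem stmt13 {n : ℕ} (A C : Matrix (Fin n) (Fin n) ℂ)
    (hA : A * Aᴴ = Aᴴ * A) (hC : Cᴴ = C) (hAC : A * C = C * A)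
    (P : Matrix (Fin n) (Fin n) ℂ) (hP : IsMoorePenroseInverse (A * Aᴴ - 1) P) :
    (P * C)ᴴ = P * C ∧
    A * (P * C) = (P * C) * A ∧
    Aᴴ * (P * C) = (P * C) * Aᴴ ∧
    C * (P * C) = (P * C) * C ∧
    ((∃ X : Matrix (Fin n) (Fin n) ℂ, Aᴴ * X * A - X = C) ↔
        Aᴴ * (P * C) * A - (P * C) = C) := by
  set M := A * Aᴴ - 1 with hMdef
  obtain ⟨h1, h2, h3, h4⟩ := hP
  have hMherm : Mᴴ = M := by
    rw [hMdef, conjTranspose_sub, conjTranspose_one, conjTranspose_mul,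
      conjTranspose_conjTranspose]
  -- P is Hermitian
  have c1 : M * Pᴴ * M = M := by
    have := congrArg conjTranspose h1
    simp only [conjTranspose_mul, hMherm, ← Matrix.mul_assoc] at this
    exact this
  have c2 : Pᴴ * M * Pᴴ = Pᴴ := by
    have := congrArg conjTranspose h2
    simp only [conjTranspose_mul, hMherm, ← Matrix.mul_assoc] at this
    exact this
  have eMPH : M * Pᴴ = P * M := by
    calc M * Pᴴ = Mᴴ * Pᴴ := by rw [hMherm]
      _ = (P * M)ᴴ := (conjTranspose_mul P M).symm
      _ = P * M := h4
  have ePHM : Pᴴ * M = M * P := by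
    calc Pᴴ * M = Pᴴ * Mᴴ := by rw [hMherm]
      _ = (M * P)ᴴ := (conjTranspose_mul M P).symm
      _ = M * P := h3
  have c3 : (M * Pᴴ)ᴴ = M * Pᴴ := by rw [eMPH]; exact h4
  have c4 : (Pᴴ * M)ᴴ = Pᴴ * M := by rw [ePHM]; exact h3
  have hPH : Pᴴ = P := mp_unique ⟨c1, c2, c3, c4⟩ ⟨h1, h2, h3, h4⟩
  have hMP : M * P = P * M := by
    calc M * P = (M * P)ᴴ := h3.symm
      _ = Pᴴ * Mᴴ := conjTranspose_mul M P
      _ = P * M := by rw [hPH, hMherm]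
  -- commutation of A, Aᴴ, C with A*Aᴴ, hence with M
  have hAAc : A * (A * Aᴴ) = (A * Aᴴ) * A := by
    calc A * (A * Aᴴ) = A * (Aᴴ * A) := by rw [hA]
      _ = (A * Aᴴ) * A := by simp only [Matrix.mul_assoc]
  have hAHAc : Aᴴ * (A * Aᴴ) = (A * Aᴴ) * Aᴴ := by
    calc Aᴴ * (A * Aᴴ) = (Aᴴ * A) * Aᴴ := by simp only [Matrix.mul_assoc]
      _ = (A * Aᴴ) * Aᴴ := by rw [hA]
  have hCAH : C * Aᴴ = Aᴴ * C := by
    calc C * Aᴴ = Cᴴ * Aᴴ := by rw [hC]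
      _ = (A * C)ᴴ := (conjTranspose_mul A C).symm
      _ = (C * A)ᴴ := by rw [hAC]
      _ = Aᴴ * Cᴴ := conjTranspose_mul C A
      _ = Aᴴ * C := by rw [hC]
  have hCAAc : C * (A * Aᴴ) = (A * Aᴴ) * C := by
    calc C * (A * Aᴴ) = (C * A) * Aᴴ := by simp only [Matrix.mul_assoc]
      _ = (A * C) * Aᴴ := by rw [hAC]
      _ = A * (C * Aᴴ) := by simp only [Matrix.mul_assoc]
      _ = A * (Aᴴ * C) := by rw [hCAH]
      _ = (A * Aᴴ) * C := by simp only [Matrix.mul_assoc]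
  have subcomm : ∀ X : Matrix (Fin n) (Fin n) ℂ,
      X * (A * Aᴴ) = (A * Aᴴ) * X → X * M = M * X := by
    intro X h
    rw [hMdef]
    simp only [Matrix.mul_sub, Matrix.sub_mul, Matrix.mul_one, Matrix.one_mul, h]
  have hAM : A * M = M * A := subcomm A hAAc
  have hAHM : Aᴴ * M = M * Aᴴ := subcomm Aᴴ hAHAc
  have hCM : C * M = M * C := subcomm C hCAAc
  have hPA : A * P = P * A := comm_mp hMherm h1 h2 h3 hMP hAM
  have hPAH : Aᴴ * P = P * Aᴴ := comm_mp hMherm h1 h2 h3 hMP hAHM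
  have hPC : C * P = P * C := comm_mp hMherm h1 h2 h3 hMP hCM
  -- (M*P) commutes with A, Aᴴ, C
  have hcMP : ∀ B : Matrix (Fin n) (Fin n) ℂ,
      B * M = M * B → B * P = P * B → B * (M * P) = (M * P) * B := by
    intro B hBM hBP
    calc B * (M * P) = (B * M) * P := by simp only [Matrix.mul_assoc]
      _ = (M * B) * P := by rw [hBM]
      _ = M * (B * P) := by simp only [Matrix.mul_assoc]
      _ = M * (P * B) := by rw [hBP]
      _ = (M * P) * B := by simp only [Matrix.mul_assoc]
  have hAMP : A * (M * P) = (M * P) * A := hcMP A hAM hPA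
  have hAHMP : Aᴴ * (M * P) = (M * P) * Aᴴ := hcMP Aᴴ hAHM hPAH
  have hCMP : C * (M * P) = (M * P) * C := hcMP C hCM hPC
  refine ⟨?_, ?_, ?_, ?_, ?_⟩
  · rw [conjTranspose_mul, hC, hPH]; exact hPC
  · calc A * (P * C) = (A * P) * C := by simp only [Matrix.mul_assoc]
      _ = (P * A) * C := by rw [hPA]
      _ = P * (A * C) := by simp only [Matrix.mul_assoc]
      _ = P * (C * A) := by rw [hAC]
      _ = (P * C) * A := by simp only [Matrix.mul_assoc]
  · calc Aᴴ * (P * C) = (Aᴴ * P) * C := by simp only [Matrix.mul_assoc]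
      _ = (P * Aᴴ) * C := by rw [hPAH]
      _ = P * (Aᴴ * C) := by simp only [Matrix.mul_assoc]
      _ = P * (C * Aᴴ) := by rw [hCAH]
      _ = (P * C) * Aᴴ := by simp only [Matrix.mul_assoc]
  · calc C * (P * C) = (C * P) * C := by simp only [Matrix.mul_assoc]
      _ = (P * C) * C := by rw [hPC]
  · constructor
    · rintro ⟨X, hX⟩
      -- first show (M*P)*C = C using the trace argument
      have hM1 : A * Aᴴ = M + 1 := by rw [hMdef]; noncomm_ring
      have hME0 : M * (1 - M * P) = 0 := by
        rw [Matrix.mul_sub, Matrix.mul_one, hMP, ← Matrix.mul_assoc, h1, sub_self]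
      have hE0idem : (1 - M * P) * (1 - M * P) = 1 - M * P := by
        have hMPMP : (M * P) * (M * P) = M * P := by
          calc (M * P) * (M * P) = (M * P * M) * P := by simp only [Matrix.mul_assoc]
            _ = M * P := by rw [h1]
        calc (1 - M * P) * (1 - M * P)
            = 1 - M * P - M * P + (M * P) * (M * P) := by noncomm_ring
          _ = 1 - M * P - M * P + M * P := by rw [hMPMP]
          _ = 1 - M * P := by noncomm_ring
      have hE0c : ∀ B : Matrix (Fin n) (Fin n) ℂ,
          B * (M * P) = (M * P) * B → B * (1 - M * P) = (1 - M * P) * B := by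
        intro B hB
        simp only [Matrix.mul_sub, Matrix.sub_mul, Matrix.mul_one, Matrix.one_mul, hB]
      have hAE0 := hE0c A hAMP
      have hAHE0 := hE0c Aᴴ hAHMP
      have hCE0 := hE0c C hCMP
      set E0 := 1 - M * P with hE0def
      have hE0H : E0ᴴ = E0 := by
        rw [hE0def, conjTranspose_sub, conjTranspose_one, h3]
      have hDH : (C * E0)ᴴ = C * E0 := by
        rw [conjTranspose_mul, hC, hE0H, ← hCE0]
      have hY2 : Aᴴ * (E0 * X * E0) * A = E0 * (Aᴴ * X * A) * E0 := by
        calc Aᴴ * (E0 * X * E0) * A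
            = (Aᴴ * E0) * (X * (E0 * A)) := by simp only [Matrix.mul_assoc]
          _ = (E0 * Aᴴ) * (X * (A * E0)) := by rw [hAHE0, ← hAE0]
          _ = E0 * (Aᴴ * X * A) * E0 := by simp only [Matrix.mul_assoc]
      have hD_eq : Aᴴ * (E0 * X * E0) * A - E0 * X * E0 = C * E0 := by
        rw [hY2]
        have e : E0 * (Aᴴ * X * A - X) * E0
            = E0 * (Aᴴ * X * A) * E0 - E0 * X * E0 := by
          rw [Matrix.mul_sub E0 (Aᴴ * X * A) X,
            Matrix.sub_mul (E0 * (Aᴴ * X * A)) (E0 * X) E0]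
        rw [← e, hX]
        calc E0 * C * E0 = (C * E0) * E0 := by rw [hCE0]
          _ = C * (E0 * E0) := by simp only [Matrix.mul_assoc]
          _ = C * E0 := by rw [hE0idem]
      have hMY : M * (E0 * X * E0) = 0 := by
        have e : M * (E0 * X * E0) = ((M * E0) * X) * E0 := by
          simp only [Matrix.mul_assoc]
        rw [e, hME0, Matrix.zero_mul, Matrix.zero_mul]
      have hAD : A * (C * E0) = (C * E0) * A := by
        calc A * (C * E0) = (A * C) * E0 := by simp only [Matrix.mul_assoc]
          _ = (C * A) * E0 := by rw [hAC]
          _ = C * (A * E0) := by simp only [Matrix.mul_assoc]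
          _ = C * (E0 * A) := by rw [hAE0]
          _ = (C * E0) * A := by simp only [Matrix.mul_assoc]
      have hTr1 : trace ((Aᴴ * (E0 * X * E0) * A) * (C * E0))
          = trace ((E0 * X * E0) * (C * E0)) := by
        have e1 : (Aᴴ * (E0 * X * E0) * A) * (C * E0)
            = (Aᴴ * ((E0 * X * E0) * (C * E0))) * A := by
          calc (Aᴴ * (E0 * X * E0) * A) * (C * E0)
              = Aᴴ * ((E0 * X * E0) * (A * (C * E0))) := by
                simp only [Matrix.mul_assoc]
            _ = Aᴴ * ((E0 * X * E0) * ((C * E0) * A)) := by rw [hAD]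
            _ = (Aᴴ * ((E0 * X * E0) * (C * E0))) * A := by
                simp only [Matrix.mul_assoc]
        rw [e1, Matrix.trace_mul_comm]
        have e2 : A * (Aᴴ * ((E0 * X * E0) * (C * E0)))
            = M * ((E0 * X * E0) * (C * E0)) + (E0 * X * E0) * (C * E0) := by
          calc A * (Aᴴ * ((E0 * X * E0) * (C * E0)))
              = (A * Aᴴ) * ((E0 * X * E0) * (C * E0)) := by
                simp only [Matrix.mul_assoc]
            _ = (M + 1) * ((E0 * X * E0) * (C * E0)) := by rw [hM1]
            _ = M * ((E0 * X * E0) * (C * E0))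
                + 1 * ((E0 * X * E0) * (C * E0)) := by rw [Matrix.add_mul]
            _ = M * ((E0 * X * E0) * (C * E0))
                + (E0 * X * E0) * (C * E0) := by rw [Matrix.one_mul]
        rw [e2]
        have e3 : M * ((E0 * X * E0) * (C * E0)) = 0 := by
          rw [← Matrix.mul_assoc, hMY, Matrix.zero_mul]
        rw [e3, zero_add]
      have t0 : trace ((C * E0)ᴴ * (C * E0)) = 0 := by
        have e4 : trace ((Aᴴ * (E0 * X * E0) * A - E0 * X * E0) * (C * E0)) = 0 := by
          rw [Matrix.sub_mul, Matrix.trace_sub, hTr1, sub_self]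
        rw [hD_eq] at e4
        rw [hDH]
        exact e4
      have hD0 : C * E0 = 0 := trace_zero_imp (C * E0) t0
      have hCE : C * (M * P) = C := by
        rw [hE0def, Matrix.mul_sub, Matrix.mul_one] at hD0
        exact (sub_eq_zero.mp hD0).symm
      have hEC : (M * P) * C = C := by rw [← hCMP]; exact hCE
      have step : Aᴴ * (P * C) * A = (M * P) * C + P * C := by
        calc Aᴴ * (P * C) * A = (Aᴴ * P) * (C * A) := by simp only [Matrix.mul_assoc]
          _ = (P * Aᴴ) * (A * C) := by rw [hPAH, ← hAC]
          _ = P * ((Aᴴ * A) * C) := by simp only [Matrix.mul_assoc]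
          _ = P * ((A * Aᴴ) * C) := by rw [← hA]
          _ = P * ((M + 1) * C) := by rw [hM1]
          _ = P * (M * C + C) := by rw [Matrix.add_mul, Matrix.one_mul]
          _ = P * (M * C) + P * C := by rw [Matrix.mul_add]
          _ = (P * M) * C + P * C := by simp only [Matrix.mul_assoc]
          _ = (M * P) * C + P * C := by rw [← hMP]
      rw [step, hEC, add_sub_cancel_right]
    · intro h
      exact ⟨P * C, h⟩
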